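/- arXiv:1906.09392 — 2 statements merged into one kernel-verified Lean document; each statement's English description precedes it below -/
import Mathlib

section
/- For every k ≥ 1 there exists n with PPL_t(n) = k, so SP_t(k) is well-defined; moreover SP_t(1) = 1, SP_t(2) = 2, SP_t(3) = 6, and SP_t(k+3) = 16·SP_t(k) − 6 for all k ≥ 1. -/
/-!
`pplTM` satisfies the 4-adic recursion `pplRec`: writing `P = pplTM`,
`P (4q) = P q`, `P (4q+1) = P q + 1`, `P (4q+2) = min (P q) (P (q+1)) + 2` and
`P (4q+3) = min (P q + 2) (P (q+1) + 1)`.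

For `P ≤ pplRec`, a factorisation of a prefix into palindromes is pushed through the morphism
`0 ↦ 0110, 1 ↦ 1001`, whose images are palindromes, and a last letter is added or removed.
For `pplRec ≤ P` it suffices that appending a palindromic factor of `t` raises `pplRec` by at
most one. This goes by induction on the length of the factor: odd palindromes in `t` have
length at most 3, and an even one has an even centre; centred at `4m` it desubstitutes to a
shorter palindrome, centred at `4m + 2` it has length at most 12 and desubstitutes to one of
length 3.

By the recursion, if `s` is the first position where `pplTM` takes the value `k`, then
`16s - 6 = 4 (4 (s - 1) + 2) + 2` is the first position where it takes the value `k + 3`.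
-/

/-- The Thue–Morse word: `tm n` is the number of ones (sum of binary digits)
in the binary expansion of `n`, taken mod 2. -/
def tm (n : ℕ) : ℕ := (Nat.digits 2 n).sum % 2

/-- `ps` is a factorization of the finite word `w` into nonempty palindromes. -/
def IsPalDecomp (w : List ℕ) (ps : List (List ℕ)) : Prop :=
  ps.flatten = w ∧ ∀ p ∈ ps, p ≠ [] ∧ p.Palindrome

/-- The palindromic length of a finite word: the least number of nonempty
palindromes whose concatenation is the word (0 for the empty word). -/
noncomputable def palLen (w : List ℕ) : ℕ :=
  sInf {k | ∃ ps, ps.length = k ∧ IsPalDecomp w ps}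

/-- `pplTM n` is the palindromic length of the prefix of length `n`
of the Thue–Morse word. -/
noncomputable def pplTM (n : ℕ) : ℕ := palLen ((List.range n).map tm)

/-- `spTM k` is the length of the shortest prefix of the Thue–Morse word of
palindromic length `k`. -/
noncomputable def spTM (k : ℕ) : ℕ := sInf {n | pplTM n = k}

/-! ### The Thue–Morse word and the recursion -/

lemma tm_lt_two (n : ℕ) : tm n < 2 := Nat.mod_lt _ two_pos

lemma tm_two_mul (n : ℕ) : tm (2 * n) = tm n := by
  rcases Nat.eq_zero_or_pos n with rfl | hn
  · rfl
  · simp [tm, Nat.digits_def' one_lt_two (by omega : 0 < 2 * n)]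

lemma tm_two_mul_add_one (n : ℕ) : tm (2 * n + 1) = 1 - tm n := by
  rw [tm, tm, Nat.digits_def' one_lt_two (by omega), List.sum_cons,
    show (2 * n + 1) % 2 = 1 by omega, show (2 * n + 1) / 2 = n by omega]
  omega

lemma tm_four_mul (n : ℕ) : tm (4 * n) = tm n := by
  rw [show 4 * n = 2 * (2 * n) by ring, tm_two_mul, tm_two_mul]

lemma tm_four_mul_add_one (n : ℕ) : tm (4 * n + 1) = 1 - tm n := by
  rw [show 4 * n + 1 = 2 * (2 * n) + 1 by ring, tm_two_mul_add_one, tm_two_mul]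

lemma tm_four_mul_add_two (n : ℕ) : tm (4 * n + 2) = 1 - tm n := by
  rw [show 4 * n + 2 = 2 * (2 * n + 1) by ring, tm_two_mul, tm_two_mul_add_one]

lemma tm_four_mul_add_three (n : ℕ) : tm (4 * n + 3) = tm n := by
  rw [show 4 * n + 3 = 2 * (2 * n + 1) + 1 by ring, tm_two_mul_add_one, tm_two_mul_add_one]
  have := tm_lt_two n
  omega

lemma odd_of_tm_eq_tm_succ {n : ℕ} (h : tm n = tm (n + 1)) : Odd n := by
  obtain ⟨m, rfl | rfl⟩ := Nat.even_or_odd' n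
  · rw [tm_two_mul, tm_two_mul_add_one] at h
    have := tm_lt_two m
    omega
  · exact odd_two_mul_add_one m

lemma tm_ne_of_tm_eq_tm_succ {n : ℕ} (h : tm n = tm (n + 1)) : tm (n + 1) ≠ tm (n + 2) :=
  fun h' => Nat.not_odd_iff_even.2 (odd_of_tm_eq_tm_succ h).add_one (odd_of_tm_eq_tm_succ h')

def pplRec (n : ℕ) : ℕ :=
  if n = 0 then 0
  else if n % 4 = 0 then pplRec (n / 4)
  else if n % 4 = 1 then pplRec (n / 4) + 1
  else if n % 4 = 2 then min (pplRec (n / 4)) (pplRec (n / 4 + 1)) + 2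
  else min (pplRec (n / 4) + 2) (pplRec (n / 4 + 1) + 1)
termination_by n
decreasing_by all_goals omega

lemma pplRec_zero : pplRec 0 = 0 := by
  rw [pplRec, if_pos rfl]

lemma pplRec_four_mul (n : ℕ) : pplRec (4 * n) = pplRec n := by
  rcases Nat.eq_zero_or_pos n with rfl | hn
  · rfl
  · rw [pplRec, if_neg (by omega), if_pos (by omega), Nat.mul_div_cancel_left _ four_pos]

lemma pplRec_four_mul_add_one (n : ℕ) : pplRec (4 * n + 1) = pplRec n + 1 := by
  rw [pplRec, if_neg (by omega), if_neg (by omega), if_pos (by omega),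
    show (4 * n + 1) / 4 = n by omega]

lemma pplRec_four_mul_add_two (n : ℕ) :
    pplRec (4 * n + 2) = min (pplRec n) (pplRec (n + 1)) + 2 := by
  rw [pplRec, if_neg (by omega), if_neg (by omega), if_neg (by omega), if_pos (by omega),
    show (4 * n + 2) / 4 = n by omega]

lemma pplRec_four_mul_add_three (n : ℕ) :
    pplRec (4 * n + 3) = min (pplRec n + 2) (pplRec (n + 1) + 1) := by
  rw [pplRec, if_neg (by omega), if_neg (by omega), if_neg (by omega), if_neg (by omega),
    show (4 * n + 3) / 4 = n by omega]

lemma exists_eq_four_mul_add (n : ℕ) :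
    ∃ q, n = 4 * q ∨ n = 4 * q + 1 ∨ n = 4 * q + 2 ∨ n = 4 * q + 3 :=
  ⟨n / 4, by omega⟩

lemma pplRec_succ_le (n : ℕ) : pplRec (n + 1) ≤ pplRec n + 1 := by
  induction n using Nat.strong_induction_on with
  | _ n ih =>
  obtain ⟨q, rfl | rfl | rfl | rfl⟩ := exists_eq_four_mul_add n
  · rw [pplRec_four_mul_add_one, pplRec_four_mul]
  · rw [show 4 * q + 1 + 1 = 4 * q + 2 by ring, pplRec_four_mul_add_two, pplRec_four_mul_add_one]
    omega
  · rw [show 4 * q + 2 + 1 = 4 * q + 3 by ring, pplRec_four_mul_add_three,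
      pplRec_four_mul_add_two]
    omega
  · rw [show 4 * q + 3 + 1 = 4 * (q + 1) by ring, pplRec_four_mul, pplRec_four_mul_add_three]
    have := ih q (by omega)
    omega

/-! ### Palindromic length and the upper bound -/

lemma palLen_le_length {w : List ℕ} {ps : List (List ℕ)} (h : IsPalDecomp w ps) :
    palLen w ≤ ps.length :=
  Nat.sInf_le ⟨ps, rfl, h⟩

lemma exists_isPalDecomp_length_eq_palLen (w : List ℕ) :
    ∃ ps, ps.length = palLen w ∧ IsPalDecomp w ps := by
  have hsingletons : IsPalDecomp w (w.map ([·])) :=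
    ⟨by simp [← List.flatMap_def], by simp [List.Palindrome.singleton]⟩
  have hmem : w.length ∈ {k | ∃ ps, ps.length = k ∧ IsPalDecomp w ps} :=
    ⟨_, List.length_map _, hsingletons⟩
  exact Nat.sInf_mem ⟨_, hmem⟩

lemma IsPalDecomp.append {u v : List ℕ} {ps qs : List (List ℕ)} (hu : IsPalDecomp u ps)
    (hv : IsPalDecomp v qs) : IsPalDecomp (u ++ v) (ps ++ qs) :=
  ⟨by rw [List.flatten_append, hu.1, hv.1],
    fun p hp => (List.mem_append.1 hp).elim (hu.2 p) (hv.2 p)⟩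

lemma palLen_append_le (u v : List ℕ) : palLen (u ++ v) ≤ palLen u + palLen v := by
  obtain ⟨ps, hps, hu⟩ := exists_isPalDecomp_length_eq_palLen u
  obtain ⟨qs, hqs, hv⟩ := exists_isPalDecomp_length_eq_palLen v
  simpa [hps, hqs] using palLen_le_length (hu.append hv)

lemma palLen_le_one {p : List ℕ} (hp : p.Palindrome) : palLen p ≤ 1 := by
  rcases eq_or_ne p [] with rfl | hne
  · exact (palLen_le_length (ps := []) ⟨rfl, by simp⟩).trans zero_le_one
  · exact palLen_le_length (ps := [p]) ⟨by simp, by simp [hne, hp]⟩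

lemma palLen_append_palindrome_le (w : List ℕ) {p : List ℕ} (hp : p.Palindrome) :
    palLen (w ++ p) ≤ palLen w + 1 :=
  (palLen_append_le w p).trans (Nat.add_le_add_left (palLen_le_one hp) _)

lemma palLen_dropLast_le_two {p : List ℕ} (hp : p.Palindrome) : palLen p.dropLast ≤ 2 := by
  cases hp with
  | nil => exact (palLen_le_one .nil).trans one_le_two
  | singleton => exact (palLen_le_one .nil).trans one_le_two
  | cons_concat x hl =>
    rw [← List.cons_append, List.dropLast_concat, ← List.singleton_append]
    exact (palLen_append_le _ _).trans
      (add_le_add (palLen_le_one (.singleton x)) (palLen_le_one hl))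

lemma palLen_le_palLen_concat_add_one (w : List ℕ) (a : ℕ) :
    palLen w ≤ palLen (w ++ [a]) + 1 := by
  obtain ⟨ps, hlen, hflat, hpal⟩ := exists_isPalDecomp_length_eq_palLen (w ++ [a])
  obtain rfl | ⟨qs, p, rfl⟩ := List.eq_nil_or_concat ps
  · simp at hflat
  rw [List.concat_eq_append] at hflat hpal hlen
  have hp := hpal p (by simp)
  have hw : w = qs.flatten ++ p.dropLast := by
    have := congrArg List.dropLast hflat
    rwa [List.flatten_append, List.flatten_singleton, List.dropLast_append_of_ne_nil hp.1,
      List.dropLast_concat, eq_comm] at this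
  have hqs : IsPalDecomp qs.flatten qs := ⟨rfl, fun q hq => hpal q (by simp [hq])⟩
  calc palLen w ≤ palLen qs.flatten + palLen p.dropLast := hw ▸ palLen_append_le _ _
    _ ≤ qs.length + 2 := add_le_add (palLen_le_length hqs) (palLen_dropLast_le_two hp.2)
    _ = palLen (w ++ [a]) + 1 := by simp [← hlen]

lemma palLen_flatMap_le (f : ℕ → List ℕ) (hf : ∀ a, (f a).Palindrome) (hne : ∀ a, f a ≠ [])
    (w : List ℕ) : palLen (w.flatMap f) ≤ palLen w := by
  obtain ⟨ps, hlen, hflat, hpal⟩ := exists_isPalDecomp_length_eq_palLen w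
  rw [← hlen, ← List.length_map (fun p => p.flatMap f)]
  refine palLen_le_length ⟨?_, ?_⟩
  · simp [← hflat, List.flatMap, List.flatten_flatten, Function.comp_def]
  · simp only [List.mem_map]
    rintro _ ⟨p, hp, rfl⟩
    refine ⟨?_, .of_reverse_eq ?_⟩
    · simpa [List.flatMap_eq_nil_iff, hne] using List.exists_mem_of_ne_nil _ (hpal p hp).1
    · rw [List.reverse_flatMap, (hpal p hp).2.reverse_eq]
      exact congrArg₂ _ (funext fun a => (hf a).reverse_eq) rfl

lemma map_tm_range_succ (n : ℕ) :
    (List.range (n + 1)).map tm = (List.range n).map tm ++ [tm n] := by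
  rw [List.range_succ, List.map_append, List.map_singleton]

lemma map_tm_range_four_mul (n : ℕ) :
    (List.range (4 * n)).map tm =
      ((List.range n).map tm).flatMap fun x => [x, 1 - x, 1 - x, x] := by
  induction n with
  | zero => rfl
  | succ n ih =>
    rw [show 4 * (n + 1) = 4 * n + 3 + 1 by ring, map_tm_range_succ, map_tm_range_succ,
      map_tm_range_succ, map_tm_range_succ, map_tm_range_succ, List.flatMap_append, ih,
      tm_four_mul_add_three, tm_four_mul_add_two, tm_four_mul_add_one, tm_four_mul]
    simp

lemma pplTM_zero : pplTM 0 = 0 :=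
  Nat.le_zero.1 (palLen_le_length (ps := []) ⟨rfl, by simp⟩)

lemma pplTM_succ_le (n : ℕ) : pplTM (n + 1) ≤ pplTM n + 1 := by
  rw [pplTM, map_tm_range_succ]
  exact palLen_append_palindrome_le _ (.singleton _)

lemma pplTM_le_pplTM_succ_add_one (n : ℕ) : pplTM n ≤ pplTM (n + 1) + 1 := by
  rw [pplTM, pplTM, map_tm_range_succ]
  exact palLen_le_palLen_concat_add_one _ _

lemma pplTM_four_mul_le (n : ℕ) : pplTM (4 * n) ≤ pplTM n := by
  rw [pplTM, map_tm_range_four_mul]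
  exact palLen_flatMap_le _ (fun x => .of_reverse_eq rfl) (fun x => List.cons_ne_nil _ _) _

lemma pplTM_four_mul_add_three_le (n : ℕ) : pplTM (4 * n + 3) ≤ pplTM (4 * n + 1) + 1 := by
  have hpal : [tm (4 * n + 1), tm (4 * n + 2)].Palindrome := by
    rw [tm_four_mul_add_one, tm_four_mul_add_two]
    exact .of_reverse_eq rfl
  rw [pplTM, pplTM, map_tm_range_succ, map_tm_range_succ, List.append_assoc]
  exact palLen_append_palindrome_le _ hpal

lemma pplTM_le_pplRec (n : ℕ) : pplTM n ≤ pplRec n := by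
  induction n using Nat.strong_induction_on with
  | _ n ih =>
  rcases Nat.eq_zero_or_pos n with rfl | hn
  · rw [pplTM_zero, pplRec_zero]
  have h4q (q : ℕ) (hq : q < n) : pplTM (4 * q) ≤ pplRec q :=
    (pplTM_four_mul_le q).trans (ih q hq)
  have h4q1 (q : ℕ) (hq : q < n) : pplTM (4 * q + 1) ≤ pplRec q + 1 :=
    (pplTM_succ_le _).trans (Nat.add_le_add_right (h4q q hq) 1)
  obtain ⟨q, rfl | rfl | rfl | rfl⟩ := exists_eq_four_mul_add n
  · rw [pplRec_four_mul]
    exact h4q q (by omega)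
  · rw [pplRec_four_mul_add_one]
    exact h4q1 q (by omega)
  · have : pplTM (4 * q + 2) ≤ pplTM (4 * q + 3) + 1 := pplTM_le_pplTM_succ_add_one _
    have : pplTM (4 * q + 3) ≤ pplTM (4 * (q + 1)) + 1 := pplTM_le_pplTM_succ_add_one _
    have : pplTM (4 * q + 2) ≤ pplTM (4 * q + 1) + 1 := pplTM_succ_le _
    have := h4q1 q (by omega)
    have := h4q (q + 1) (by omega)
    rw [pplRec_four_mul_add_two]
    omega
  · have : pplTM (4 * q + 3) ≤ pplTM (4 * (q + 1)) + 1 := pplTM_le_pplTM_succ_add_one _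
    have := pplTM_four_mul_add_three_le q
    have := h4q1 q (by omega)
    have := h4q (q + 1) (by omega)
    rw [pplRec_four_mul_add_three]
    omega

/-! ### Palindromic factors and the lower bound -/

/-- The factor `t(b) ⋯ t(b + l - 1)` of the Thue–Morse word is a palindrome, stated as
`t x = t y` whenever `b ≤ x, y` and `x + y = 2b + l - 1`. -/
def IsPalFactor (b l : ℕ) : Prop :=
  ∀ x y, b ≤ x → b ≤ y → x + y + 1 = 2 * b + l → tm x = tm y

lemma isPalFactor_of_palindrome {b l : ℕ} (h : ((List.range' b l).map tm).Palindrome) :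
    IsPalFactor b l := by
  intro x y hx hy hxy
  have hi : x - b < ((List.range' b l).map tm).length := by simp; omega
  have := List.getElem_of_eq h.reverse_eq.symm hi
  simp only [List.getElem_reverse, List.getElem_map, List.getElem_range', List.length_map,
    List.length_range', one_mul] at this
  convert this using 2 <;> omega

lemma IsPalFactor.inner {b l b' l' : ℕ} (h : IsPalFactor b l) (hb : b ≤ b')
    (hc : 2 * b' + l' = 2 * b + l) : IsPalFactor b' l' :=
  fun x y hx hy hxy => h x y (by omega) (by omega) (by omega)

/-- Positions `4x + 3` and `4y` carry `t x` and `t y`, and they mirror each other in the factor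
exactly when `x` and `y` mirror each other in the shrunken one. -/
lemma IsPalFactor.desubstitute {b l b' l' : ℕ} (h : IsPalFactor b l) (hb : b ≤ 4 * b' + 3)
    (hc : 2 * b + l = 4 * (2 * b' + l')) : IsPalFactor b' l' := by
  have key (x y : ℕ) (hx : b' ≤ x) (hxy : x < y) (hs : x + y + 1 = 2 * b' + l') :
      tm x = tm y := by
    simpa only [tm_four_mul_add_three, tm_four_mul] using
      h (4 * x + 3) (4 * y) (by omega) (by omega) (by omega)
  intro x y hx hy hs
  rcases lt_trichotomy x y with hxy | rfl | hxy
  · exact key x y hx hxy hs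
  · rfl
  · exact (key y x hy hxy (by omega)).symm

lemma not_isPalFactor_five (v : ℕ) : ¬ IsPalFactor v 5 := by
  intro h
  have h13 : tm (v + 1) = tm (v + 3) := h _ _ (by omega) (by omega) (by omega)
  have h04 : tm v = tm (v + 4) := h _ _ (by omega) (by omega) (by omega)
  have htm := tm_lt_two
  obtain ⟨w, rfl | rfl⟩ := Nat.even_or_odd' v
  · rw [show 2 * w + 3 = 2 * (w + 1) + 1 by ring, tm_two_mul_add_one, tm_two_mul_add_one] at h13
    rw [show 2 * w + 4 = 2 * (w + 2) by ring, tm_two_mul, tm_two_mul] at h04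
    have h01 : tm w = tm (w + 1) := by have := htm w; have := htm (w + 1); omega
    exact tm_ne_of_tm_eq_tm_succ h01 (h01.symm.trans h04)
  · rw [show 2 * w + 1 + 1 = 2 * (w + 1) by ring, show 2 * w + 1 + 3 = 2 * (w + 2) by ring,
      tm_two_mul, tm_two_mul] at h13
    rw [show 2 * w + 1 + 4 = 2 * (w + 2) + 1 by ring, tm_two_mul_add_one,
      tm_two_mul_add_one] at h04
    have h02 : tm w = tm (w + 2) := by have := htm w; have := htm (w + 2); omega
    exact tm_ne_of_tm_eq_tm_succ (h02.trans h13.symm) h13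

lemma pplRec_add_two_le_of_isPalFactor {b : ℕ} (h : IsPalFactor b 2) :
    pplRec (b + 2) ≤ pplRec b + 1 := by
  obtain ⟨k, hk⟩ := odd_of_tm_eq_tm_succ (h b (b + 1) le_rfl (by omega) (by omega))
  obtain ⟨q, rfl | rfl⟩ : ∃ q, b = 4 * q + 1 ∨ b = 4 * q + 3 := ⟨b / 4, by omega⟩
  · rw [show 4 * q + 1 + 2 = 4 * q + 3 by ring, pplRec_four_mul_add_three,
      pplRec_four_mul_add_one]
    omega
  · rw [show 4 * q + 3 + 2 = 4 * (q + 1) + 1 by ring, pplRec_four_mul_add_one,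
      pplRec_four_mul_add_three]
    have := pplRec_succ_le q
    omega

lemma pplRec_add_three_le_of_isPalFactor {b : ℕ} (h : IsPalFactor b 3) :
    pplRec (b + 3) ≤ pplRec b + 1 := by
  have h02 : tm b = tm (b + 2) := h _ _ le_rfl (by omega) (by omega)
  obtain ⟨q, rfl | rfl | rfl | rfl⟩ := exists_eq_four_mul_add b
  · rw [tm_four_mul, tm_four_mul_add_two] at h02
    have := tm_lt_two q
    omega
  · rw [show 4 * q + 1 + 2 = 4 * q + 3 by ring, tm_four_mul_add_one,
      tm_four_mul_add_three] at h02
    have := tm_lt_two q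
    omega
  · rw [show 4 * q + 2 + 3 = 4 * (q + 1) + 1 by ring, pplRec_four_mul_add_one,
      pplRec_four_mul_add_two]
    have := pplRec_succ_le q
    omega
  · rw [show 4 * q + 3 + 3 = 4 * (q + 1) + 2 by ring, pplRec_four_mul_add_two,
      pplRec_four_mul_add_three]
    have := pplRec_succ_le q
    omega

lemma pplRec_add_le_of_isPalFactor_odd {b r : ℕ} (h : IsPalFactor b (2 * r + 1)) :
    pplRec (b + (2 * r + 1)) ≤ pplRec b + 1 := by
  rcases (by omega : r = 0 ∨ r = 1 ∨ 2 ≤ r) with rfl | rfl | hr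
  · exact pplRec_succ_le b
  · exact pplRec_add_three_le_of_isPalFactor h
  · exact absurd (h.inner (by omega) (by omega)) (not_isPalFactor_five (b + r - 2))

/-- The common last step of both even cases of `pplRec_add_le_of_isPalFactor`: the factor runs
from `4a + r` to `4(c + 1) - r`, and `hA`, `hB` come from its desubstituted palindromes. -/
lemma pplRec_four_mul_add_four_sub_le {a c r : ℕ} (hr : r ≤ 3)
    (hA : pplRec (c + 1) ≤ pplRec a + 1) (hB : pplRec c ≤ pplRec (a + 1) + 1) :
    pplRec (4 * (c + 1) - r) ≤ pplRec (4 * a + r) + 1 := by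
  have := pplRec_succ_le a
  interval_cases r
  · simpa only [Nat.sub_zero, Nat.add_zero, pplRec_four_mul] using hA
  · rw [show 4 * (c + 1) - 1 = 4 * c + 3 by omega, pplRec_four_mul_add_three,
      pplRec_four_mul_add_one]
    omega
  · rw [show 4 * (c + 1) - 2 = 4 * c + 2 by omega, pplRec_four_mul_add_two,
      pplRec_four_mul_add_two]
    omega
  · rw [show 4 * (c + 1) - 3 = 4 * c + 1 by omega, pplRec_four_mul_add_one,
      pplRec_four_mul_add_three]
    omega

lemma pplRec_add_le_of_isPalFactor_of_center_four_mul_add_two {b d m : ℕ}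
    (h : IsPalFactor b (2 * d)) (hd : 2 ≤ d) (hc : b + d = 4 * m + 2) :
    pplRec (b + 2 * d) ≤ pplRec b + 1 := by
  rcases (by omega : d = 2 ∨ 3 ≤ d ∧ d ≤ 6 ∨ 7 ≤ d) with rfl | hd6 | hd7
  · obtain rfl : b = 4 * m := by omega
    rw [show 4 * m + 2 * 2 = 4 * (m + 1) by ring, pplRec_four_mul, pplRec_four_mul]
    exact pplRec_succ_le m
  · obtain ⟨μ, rfl⟩ : ∃ μ, m = μ + 1 := ⟨m - 1, by omega⟩
    have h3 : pplRec (μ + 3) ≤ pplRec μ + 1 :=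
      pplRec_add_three_le_of_isPalFactor (h.desubstitute (by omega) (by omega))
    have := pplRec_four_mul_add_four_sub_le (c := μ + 2) (r := 6 - d) (by omega) h3
      (pplRec_succ_le (μ + 1))
    rwa [show 4 * (μ + 2 + 1) - (6 - d) = b + 2 * d by omega,
      show 4 * μ + (6 - d) = b by omega] at this
  · exact absurd (h.desubstitute (b' := m - 2) (by omega) (by omega)) (not_isPalFactor_five _)

lemma pplRec_add_le_of_isPalFactor_of_center_four_mul {b d m : ℕ}
    (ih : ∀ l < 2 * d, ∀ b, IsPalFactor b l → pplRec (b + l) ≤ pplRec b + 1)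
    (h : IsPalFactor b (2 * d)) (hd : 2 ≤ d) (hc : b + d = 4 * m) :
    pplRec (b + 2 * d) ≤ pplRec b + 1 := by
  obtain ⟨u, a, hdu, hm⟩ : ∃ u a, 4 * u + 1 ≤ d ∧ d ≤ 4 * u + 4 ∧ m = a + u + 1 :=
    ⟨(d - 1) / 4, m - (d - 1) / 4 - 1, by omega, by omega, by omega⟩
  have hA : IsPalFactor a (2 * (u + 1)) := h.desubstitute (by omega) (by omega)
  have hB : IsPalFactor (a + 1) (2 * u) := hA.inner (by omega) (by omega)
  have ihA := ih _ (by omega) a hA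
  have ihB := ih _ (by omega) (a + 1) hB
  rw [show a + 2 * (u + 1) = a + 2 * u + 1 + 1 by ring] at ihA
  rw [show a + 1 + 2 * u = a + 2 * u + 1 by ring] at ihB
  have := pplRec_four_mul_add_four_sub_le (r := 4 * u + 4 - d) (by omega) ihA ihB
  rwa [show 4 * (a + 2 * u + 1 + 1) - (4 * u + 4 - d) = b + 2 * d by omega,
    show 4 * a + (4 * u + 4 - d) = b by omega] at this

theorem pplRec_add_le_of_isPalFactor (l : ℕ) :
    ∀ b, IsPalFactor b l → pplRec (b + l) ≤ pplRec b + 1 := by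
  induction l using Nat.strong_induction_on with
  | _ l ih =>
  intro b h
  obtain ⟨d, rfl | rfl⟩ := Nat.even_or_odd' l
  · rcases (by omega : d = 0 ∨ d = 1 ∨ 2 ≤ d) with rfl | rfl | hd
    · simp
    · exact pplRec_add_two_le_of_isPalFactor h
    · have hmid : tm (b + d - 1) = tm (b + d - 1 + 1) := h _ _ (by omega) (by omega) (by omega)
      obtain ⟨k, hk⟩ := odd_of_tm_eq_tm_succ hmid
      obtain ⟨m, hc | hc⟩ : ∃ m, b + d = 4 * m ∨ b + d = 4 * m + 2 := ⟨(b + d) / 4, by omega⟩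
      · exact pplRec_add_le_of_isPalFactor_of_center_four_mul ih h hd hc
      · exact pplRec_add_le_of_isPalFactor_of_center_four_mul_add_two h hd hc
  · exact pplRec_add_le_of_isPalFactor_odd h

lemma pplRec_add_le_of_flatten_eq {ps : List (List ℕ)} (hps : ∀ p ∈ ps, p.Palindrome)
    {b n : ℕ} (h : ps.flatten = (List.range' b n).map tm) :
    pplRec (b + n) ≤ pplRec b + ps.length := by
  induction ps generalizing b n with
  | nil =>
    obtain rfl : n = 0 := by simpa using h.symm
    simp
  | cons p ps ih =>
    obtain ⟨l₁, l₂, hl, rfl, hps'⟩ := List.append_eq_map_iff.1 h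
    obtain ⟨k, hk, rfl, rfl⟩ := List.range'_eq_append_iff.1 hl
    have hp := pplRec_add_le_of_isPalFactor k b (isPalFactor_of_palindrome (hps _ (by simp)))
    have hrest := ih (fun q hq => hps q (by simp [hq])) hps'.symm
    rw [Nat.mul_one, show b + k + (n - k) = b + n by omega] at hrest
    simp only [List.length_cons]
    omega

lemma pplRec_le_pplTM (n : ℕ) : pplRec n ≤ pplTM n := by
  obtain ⟨ps, hlen, hflat, hpal⟩ := exists_isPalDecomp_length_eq_palLen ((List.range n).map tm)
  have := pplRec_add_le_of_flatten_eq (fun p hp => (hpal p hp).2) (b := 0)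
    (by rw [hflat, List.range_eq_range'])
  rwa [zero_add, pplRec_zero, zero_add, hlen] at this

theorem pplTM_eq_pplRec (n : ℕ) : pplTM n = pplRec n :=
  le_antisymm (pplTM_le_pplRec n) (pplRec_le_pplTM n)

/-! ### Shortest prefixes -/

lemma isLeast_pplRec_one_two_three :
    IsLeast {n | pplRec n = 1} 1 ∧ IsLeast {n | pplRec n = 2} 2 ∧
      IsLeast {n | pplRec n = 3} 6 := by
  have h0 := pplRec_zero
  have h1 : pplRec 1 = 1 := by simpa [h0] using pplRec_four_mul_add_one 0
  have h2 : pplRec 2 = 2 := by simpa [h0, h1] using pplRec_four_mul_add_two 0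
  have h3 : pplRec 3 = 2 := by simpa [h0, h1] using pplRec_four_mul_add_three 0
  have h4 : pplRec 4 = 1 := by simpa [h1] using pplRec_four_mul 1
  have h5 : pplRec 5 = 2 := by simpa [h1] using pplRec_four_mul_add_one 1
  have h6 : pplRec 6 = 3 := by simpa [h1, h2] using pplRec_four_mul_add_two 1
  refine ⟨⟨h1, fun n hn => ?_⟩, ⟨h2, fun n hn => ?_⟩, ⟨h6, fun n hn => ?_⟩⟩ <;>
  · by_contra! hlt
    interval_cases n <;> simp_all

lemma pos_of_isLeast_pplRec {k s : ℕ} (hs : IsLeast {n | pplRec n = k} s) (hk : 1 ≤ k) :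
    0 < s := by
  rcases Nat.eq_zero_or_pos s with rfl | hpos
  · have : pplRec 0 = k := hs.1
    rw [pplRec_zero] at this
    omega
  · exact hpos

lemma pplRec_lt_of_lt_of_isLeast {k s n : ℕ} (hs : IsLeast {n | pplRec n = k} s) (hn : n < s) :
    pplRec n < k := by
  have hne {m : ℕ} (hm : m < s) : pplRec m ≠ k := fun h => absurd (hs.2 h) (by omega)
  induction n with
  | zero =>
    rw [pplRec_zero]
    exact Nat.pos_of_ne_zero fun hk => hne hn (by rw [pplRec_zero, hk])
  | succ n ih =>
    have := pplRec_succ_le n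
    have := ih (by omega)
    have := hne hn
    omega

lemma pplRec_le_add_one_of_lt_four_mul {k s m : ℕ} (hs : IsLeast {n | pplRec n = k} s)
    (hm : m < 4 * s) : pplRec m ≤ k + 1 := by
  have hlt {n : ℕ} (hn : n < s) := pplRec_lt_of_lt_of_isLeast hs hn
  obtain ⟨q, rfl | rfl | rfl | rfl⟩ := exists_eq_four_mul_add m
  · rw [pplRec_four_mul]
    have := hlt (n := q) (by omega)
    omega
  · rw [pplRec_four_mul_add_one]
    have := hlt (n := q) (by omega)
    omega
  · rw [pplRec_four_mul_add_two]
    have := hlt (n := q) (by omega)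
    omega
  · rw [pplRec_four_mul_add_three]
    have : pplRec (q + 1) ≤ k := by
      rcases (by omega : q + 1 < s ∨ q + 1 = s) with hq | hq
      · exact (hlt hq).le
      · exact hq ▸ hs.1.le
    omega

lemma min_pplRec_le_of_add_two_lt_four_mul {k s q : ℕ} (hs : IsLeast {n | pplRec n = k} s)
    (hq : q + 2 < 4 * s) : min (pplRec q) (pplRec (q + 1)) ≤ k := by
  have hlt {n : ℕ} (hn : n < s) := pplRec_lt_of_lt_of_isLeast hs hn
  obtain ⟨u, rfl | rfl | rfl | rfl⟩ := exists_eq_four_mul_add q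
  · rw [pplRec_four_mul]
    have := hlt (n := u) (by omega)
    omega
  · rw [pplRec_four_mul_add_one]
    have := hlt (n := u) (by omega)
    omega
  · rw [show 4 * u + 2 + 1 = 4 * u + 3 by ring, pplRec_four_mul_add_three]
    have := hlt (n := u + 1) (by omega)
    omega
  · rw [pplRec_four_mul_add_three]
    have := hlt (n := u + 1) (by omega)
    omega

lemma isLeast_pplRec_add_three {k s : ℕ} (hs : IsLeast {n | pplRec n = k} s) (hk : 1 ≤ k) :
    IsLeast {n | pplRec n = k + 3} (16 * s - 6) := by
  obtain ⟨t, rfl⟩ : ∃ t, s = t + 1 := ⟨s - 1, by have := pos_of_isLeast_pplRec hs hk; omega⟩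
  have ht : pplRec t + 1 = k := by
    have := pplRec_lt_of_lt_of_isLeast hs (n := t) (by omega)
    have := pplRec_succ_le t
    have : pplRec (t + 1) = k := hs.1
    omega
  refine ⟨?_, fun n hn => ?_⟩
  · show pplRec (16 * (t + 1) - 6) = k + 3
    rw [show 16 * (t + 1) - 6 = 4 * (4 * t + 2) + 2 by omega, pplRec_four_mul_add_two,
      pplRec_four_mul_add_two, pplRec_four_mul_add_three, hs.1]
    omega
  · by_contra! hlt
    have hn : pplRec n = k + 3 := hn
    obtain ⟨q, rfl | rfl | rfl | rfl⟩ := exists_eq_four_mul_add n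
    · rw [pplRec_four_mul] at hn
      have := pplRec_le_add_one_of_lt_four_mul hs (m := q) (by omega)
      omega
    · rw [pplRec_four_mul_add_one] at hn
      have := pplRec_le_add_one_of_lt_four_mul hs (m := q) (by omega)
      omega
    · rw [pplRec_four_mul_add_two] at hn
      have := min_pplRec_le_of_add_two_lt_four_mul hs (q := q) (by omega)
      omega
    · rw [pplRec_four_mul_add_three] at hn
      have := pplRec_le_add_one_of_lt_four_mul hs (m := q + 1) (by omega)
      omega

lemma exists_isLeast_pplRec {k : ℕ} (hk : 1 ≤ k) : ∃ s, IsLeast {n | pplRec n = k} s := by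
  induction k using Nat.strong_induction_on with
  | _ k ih =>
  obtain ⟨h1, h2, h3⟩ := isLeast_pplRec_one_two_three
  rcases (by omega : k = 1 ∨ k = 2 ∨ k = 3 ∨ 4 ≤ k) with rfl | rfl | rfl | hk4
  · exact ⟨1, h1⟩
  · exact ⟨2, h2⟩
  · exact ⟨6, h3⟩
  · obtain ⟨j, rfl⟩ : ∃ j, k = j + 3 := ⟨k - 3, by omega⟩
    obtain ⟨s, hs⟩ := ih j (by omega) (by omega)
    exact ⟨_, isLeast_pplRec_add_three hs (by omega)⟩

lemma spTM_eq_of_isLeast {k s : ℕ} (hs : IsLeast {n | pplRec n = k} s) : spTM k = s := by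
  simp only [spTM, pplTM_eq_pplRec]
  exact hs.csInf_eq

/-- For every `k ≥ 1` some prefix of the Thue–Morse word has palindromic length
`k` (so `SP_t(k)` is well defined); moreover `SP_t(1) = 1`, `SP_t(2) = 2`,
`SP_t(3) = 6`, and `SP_t(k+3) = 16·SP_t(k) − 6` for all `k ≥ 1`. -/
theorem spTM_recurrence :
    (∀ k, 1 ≤ k → ∃ n, pplTM n = k) ∧
    spTM 1 = 1 ∧ spTM 2 = 2 ∧ spTM 3 = 6 ∧
    ∀ k, 1 ≤ k → spTM (k + 3) + 6 = 16 * spTM k := by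
  obtain ⟨h1, h2, h3⟩ := isLeast_pplRec_one_two_three
  refine ⟨fun k hk => ?_, spTM_eq_of_isLeast h1, spTM_eq_of_isLeast h2, spTM_eq_of_isLeast h3,
    fun k hk => ?_⟩
  · obtain ⟨s, hs⟩ := exists_isLeast_pplRec hk
    exact ⟨s, (pplTM_eq_pplRec s).trans hs.1⟩
  · obtain ⟨s, hs⟩ := exists_isLeast_pplRec hk
    rw [spTM_eq_of_isLeast hs, spTM_eq_of_isLeast (isLeast_pplRec_add_three hs hk)]
    have := pos_of_isLeast_pplRec hs hk
    omega
end

section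
/- The limit inferior, as n → ∞, of PPL_t(n) / ln n equals 0; indeed PPL_t(4^m) = 1 for all m ≥ 0. -/
open Filter Topology

theorem Nat.digits_two_sum (n : ℕ) :
    (Nat.digits 2 n).sum = n % 2 + (Nat.digits 2 (n / 2)).sum := by
  rcases n.eq_zero_or_pos with rfl | hn
  · simp
  · simp [Nat.digits_def' one_lt_two hn]

theorem Nat.digits_two_sum_two_pow_sub_one_sub {k n : ℕ} (hn : n < 2 ^ k) :
    (Nat.digits 2 (2 ^ k - 1 - n)).sum + (Nat.digits 2 n).sum = k := by
  induction k generalizing n with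
  | zero => simp_all
  | succ k ih =>
    have hpow : 2 ^ (k + 1) = 2 * 2 ^ k := by ring
    have hhalf : (2 ^ (k + 1) - 1 - n) / 2 = 2 ^ k - 1 - n / 2 := by omega
    have hc := Nat.digits_two_sum (2 ^ (k + 1) - 1 - n)
    rw [hhalf] at hc
    have hsum := Nat.digits_two_sum n
    have hih := ih (n := n / 2) (by omega)
    omega

theorem tm_two_pow_sub_one_sub {k n : ℕ} (hn : n < 2 ^ k) :
    tm (2 ^ k - 1 - n) = (tm n + k) % 2 := by
  have hsum := Nat.digits_two_sum_two_pow_sub_one_sub hn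
  unfold tm
  omega

theorem List.palindrome_map_range {α : Type*} {f : ℕ → α} {n : ℕ}
    (hf : ∀ i < n, f (n - 1 - i) = f i) : ((List.range n).map f).Palindrome := by
  refine .of_reverse_eq (List.ext_getElem (by simp) fun i _ hi => ?_)
  simp only [length_map, length_range] at hi
  simpa using hf i hi

theorem tm_prefix_palindrome {k : ℕ} (hk : Even k) :
    ((List.range (2 ^ k)).map tm).Palindrome :=
  List.palindrome_map_range fun i hi => by
    obtain ⟨j, rfl⟩ := hk
    have htm : tm i < 2 := Nat.mod_lt _ two_pos
    rw [tm_two_pow_sub_one_sub hi]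
    omega

theorem palLen_eq_one_of_palindrome {w : List ℕ} (hw : w ≠ []) (hp : w.Palindrome) : palLen w = 1 := by
  have hone : 1 ∈ {k | ∃ ps, ps.length = k ∧ IsPalDecomp w ps} :=
    ⟨[w], rfl, by simp, by simpa using ⟨hw, hp⟩⟩
  have hzero : 0 ∉ {k | ∃ ps, ps.length = k ∧ IsPalDecomp w ps} := by
    rintro ⟨ps, hlen, hflat, -⟩
    simp_all [List.length_eq_zero_iff]
  refine le_antisymm (Nat.sInf_le hone) (Nat.one_le_iff_ne_zero.2 fun h => ?_)
  rcases Nat.sInf_eq_zero.1 h with h | h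
  · exact hzero h
  · exact h.subset hone

theorem pplTM_four_pow (m : ℕ) : pplTM (4 ^ m) = 1 := by
  rw [pplTM, show 4 ^ m = 2 ^ (2 * m) by rw [pow_mul]; norm_num]
  exact palLen_eq_one_of_palindrome (by simp) (tm_prefix_palindrome (even_two_mul m))

theorem Filter.liminf_eq_zero_of_tendsto_comp {ι α : Type*} {f : Filter α} {l : Filter ι}
    [l.NeBot] {u : α → ℝ} {v : ι → α} (hu : ∀ x, 0 ≤ u x) (hv : Tendsto v l f)
    (huv : Tendsto (u ∘ v) l (𝓝 0)) : liminf u f = 0 := by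
  have hfreq : ∃ᶠ i in l, u (v i) ≤ 1 :=
    (huv.eventually (eventually_le_nhds one_pos)).frequently
  refine le_antisymm ?_ (le_liminf_of_le (.of_frequently_le (hv.frequently hfreq)) (.of_forall hu))
  calc liminf u f ≤ liminf (u ∘ v) l :=
        hv.liminf_le_liminf_comp (.of_frequently_le (frequently_map.2 hfreq))
          (isBoundedUnder_of ⟨0, hu⟩)
    _ = 0 := huv.liminf_eq

/-- The limit inferior of `PPL_t(n) / ln n` equals 0; indeed
`PPL_t(4^m) = 1` for all `m ≥ 0`. -/
theorem pplTM_liminf :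
    Filter.liminf (fun n : ℕ => (pplTM n : ℝ) / Real.log n) Filter.atTop = 0 ∧
    ∀ m : ℕ, pplTM (4 ^ m) = 1 := by
  refine ⟨Filter.liminf_eq_zero_of_tendsto_comp (v := (4 ^ ·))
    (fun n => div_nonneg (Nat.cast_nonneg _) (Real.log_natCast_nonneg n))
    (tendsto_pow_atTop_atTop_of_one_lt (by norm_num)) ?_, pplTM_four_pow⟩
  have hlog : Tendsto (fun m : ℕ => Real.log ((4 ^ m : ℕ) : ℝ)) atTop atTop :=
    Real.tendsto_log_atTop.comp <| tendsto_natCast_atTop_atTop.comp <|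
      tendsto_pow_atTop_atTop_of_one_lt (by norm_num)
  exact hlog.inv_tendsto_atTop.congr fun m => by
    simp only [Pi.inv_apply, Function.comp_apply, pplTM_four_pow, Nat.cast_one, one_div]
end
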